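/- (Approximate k-means error bound.) Fix ε > 0 and matrices U, Ū ∈ ℝ^{n×r} with Ū = M̄ C̄ for a membership matrix M̄ ∈ 𝕄_{n,r} and C̄ ∈ ℝ^{r×r}. Let (M, C) with M ∈ 𝕄_{n,r}, C ∈ ℝ^{r×r} satisfy ‖M C − U‖_F^2 ≤ (1+ε) min_{M' ∈ 𝕄_{n,r}, C' ∈ ℝ^{r×r}} ‖M' C' − U‖_F^2. Let Ω_k = {i ∈ [n] : M̄(i,k) = 1}. For any numbers δ_k > 0 with δ_k ≤ min_{l ≠ k} ‖C̄(l,:) − C̄(k,:)‖ for all k ∈ [r], define S_k = {i ∈ Ω_k : ‖(M C)(i,:) − Ū(i,:)‖ ≥ δ_k / 2}. Then (1) Σ_{k=1}^r |S_k| δ_k^2 ≤ 4(4 + 2ε) ‖Ū − U‖_F^2; and (2) if (16 + 8ε) ‖Ū − U‖_F^2 / δ_k^2 < |Ω_k| for all k ∈ [r], then, with G = ∪_{k=1}^r (Ω_k \ S_k), there exists an r×r permutation matrix J such that M̄(G,:) = M(G,:) J, i.e., M and M̄ assign the same clusters (up to relabeling) to all points in G. -/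

import Mathlib

/-
Comparing the (1+ε)-optimal pair (M, C) with the feasible pair (M̄, C̄) gives
‖MC − Ū‖_F² ≤ 2‖MC − U‖_F² + 2‖Ū − U‖_F² ≤ (4 + 2ε)‖Ū − U‖_F², and every point of S_k
contributes at least δ_k²/4 to the left side, which is (1). Under the size condition of (2),
|S_k| < |Ω_k|, so every true cluster k contains a point whose estimated center lies within δ_k/2
of C̄(k,:). Since the true centers are separated by the δ_k, two such points with the same
estimated center have the same true cluster, so estimated and true labels of these points
determine each other through a permutation.
-/

open scoped BigOperators
open Matrix

noncomputable section

namespace MJ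

/-- Euclidean (ℓ2) norm of a finite vector. -/
def l2 {k : ℕ} (v : Fin k → ℝ) : ℝ := Real.sqrt (∑ j, v j ^ 2)

/-- ℓ1 norm of a finite vector. -/
def l1 {k : ℕ} (v : Fin k → ℝ) : ℝ := ∑ i, |v i|

/-- Maximum absolute row sum (matrix ∞-norm). -/
def rowSumNorm {m k : ℕ} (A : Matrix (Fin m) (Fin k) ℝ) : ℝ := ⨆ i, ∑ j, |A i j|

/-- Frobenius norm. -/
def frob {m k : ℕ} (A : Matrix (Fin m) (Fin k) ℝ) : ℝ := Real.sqrt (∑ i, ∑ j, A i j ^ 2)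

/-- Spectral norm (ℓ2 operator norm). -/
def spec {m k : ℕ} (A : Matrix (Fin m) (Fin k) ℝ) : ℝ :=
  sSup {c : ℝ | ∃ x : Fin k → ℝ, l2 x ≤ 1 ∧ c = l2 (A.mulVec x)}

/-- `i`-th largest singular value (1-indexed), via Courant–Fischer max-min. -/
def singVal {m k : ℕ} (A : Matrix (Fin m) (Fin k) ℝ) (i : ℕ) : ℝ :=
  sSup {c : ℝ | ∃ V : Submodule ℝ (Fin k → ℝ), Module.finrank ℝ V = i ∧
    ∀ x ∈ V, c * l2 x ≤ l2 (A.mulVec x)}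

/-- Row-stochastic matrix. -/
def RowStochastic {k : ℕ} (P : Matrix (Fin k) (Fin k) ℝ) : Prop :=
  (∀ i j, 0 ≤ P i j) ∧ ∀ i, ∑ j, P i j = 1

/-- Probability vector. -/
def IsProbVec {k : ℕ} (v : Fin k → ℝ) : Prop := (∀ i, 0 ≤ v i) ∧ ∑ i, v i = 1

/-- Stationary distribution: a probability vector with πᵀ P = πᵀ. -/
def IsStationary {k : ℕ} (P : Matrix (Fin k) (Fin k) ℝ) (piv : Fin k → ℝ) : Prop :=
  IsProbVec piv ∧ ∀ j, ∑ i, piv i * P i j = piv j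

/-- Ergodicity (irreducible + aperiodic ⟺ primitive for finite chains). -/
def Ergodic' {k : ℕ} (P : Matrix (Fin k) (Fin k) ℝ) : Prop :=
  ∃ t : ℕ, ∀ i j, 0 < (P ^ t) i j

/-- ε-mixing time: τ(ε) = min{t : max_i (1/2)‖(P^t)(i,:) − π‖₁ ≤ ε}. -/
def mixingTime {k : ℕ} (P : Matrix (Fin k) (Fin k) ℝ) (piv : Fin k → ℝ) (ε : ℝ) : ℕ :=
  sInf {t : ℕ | ∀ i, (1/2) * ∑ j, |(P ^ t) i j - piv j| ≤ ε}

/-- Full SVD decomposition predicate: A = U S Vᵀ with U, V orthogonal and S diagonal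
with nonnegative entries arranged in descending order. -/
def IsSVD {m k : ℕ} (A : Matrix (Fin m) (Fin k) ℝ) (U : Matrix (Fin m) (Fin m) ℝ)
    (S : Matrix (Fin m) (Fin k) ℝ) (V : Matrix (Fin k) (Fin k) ℝ) : Prop :=
  Uᵀ * U = 1 ∧ Vᵀ * V = 1 ∧ A = U * S * Vᵀ ∧
  (∀ (i : Fin m) (j : Fin k), (i : ℕ) ≠ (j : ℕ) → S i j = 0) ∧
  (∀ i j, 0 ≤ S i j) ∧
  (∀ (a b : ℕ) (ham : a < m) (hak : a < k) (hbm : b < m) (hbk : b < k),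
    a ≤ b → S ⟨b, hbm⟩ ⟨b, hbk⟩ ≤ S ⟨a, ham⟩ ⟨a, hak⟩)

/-- `Ur` consists of the first `r` left singular vectors of `A`. -/
def IsLeftSingTrunc {m k : ℕ} (A : Matrix (Fin m) (Fin k) ℝ) (r : ℕ)
    (Ur : Matrix (Fin m) (Fin r) ℝ) : Prop :=
  ∃ U S V, IsSVD A U S V ∧ ∃ h : r ≤ m, ∀ (i : Fin m) (j : Fin r),
    Ur i j = U i ⟨(j : ℕ), lt_of_lt_of_le j.isLt h⟩

/-- `Vr` consists of the first `r` right singular vectors of `A`. -/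
def IsRightSingTrunc {m k : ℕ} (A : Matrix (Fin m) (Fin k) ℝ) (r : ℕ)
    (Vr : Matrix (Fin k) (Fin r) ℝ) : Prop :=
  IsLeftSingTrunc Aᵀ r Vr

/-- The matrix (I − EEᵀ)(FFᵀ), whose spectral/Frobenius norm is the sinΘ distance
between the column spaces of `E` and `F` (for `E`, `F` with orthonormal columns). -/
def sinThetaMat {k r : ℕ} (E F : Matrix (Fin k) (Fin r) ℝ) : Matrix (Fin k) (Fin k) ℝ :=
  (1 - E * Eᵀ) * (F * Fᵀ)

/-- Membership matrix: each row has exactly one entry 1 and all others 0. -/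
def IsMembership {k r : ℕ} (M : Matrix (Fin k) (Fin r) ℝ) : Prop :=
  ∀ i, ∃ j, M i j = 1 ∧ ∀ j', j' ≠ j → M i j' = 0

/-- A family of finsets forming a partition of `Fin k`. -/
def IsPartition {k r : ℕ} (Ω : Fin r → Finset (Fin k)) : Prop :=
  (∀ a b, a ≠ b → Disjoint (Ω a) (Ω b)) ∧ Finset.univ.biUnion Ω = Finset.univ

/-- `P` is aggregatable w.r.t. partition `Ω`: rows within the same cluster coincide. -/
def Aggregatable {k r : ℕ} (P : Matrix (Fin k) (Fin k) ℝ) (Ω : Fin r → Finset (Fin k)) : Prop :=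
  ∀ s, ∀ i ∈ Ω s, ∀ j ∈ Ω s, ∀ c, P i c = P j c

/-- Misclustering rate: min over bijections of the relative misclustering counts. -/
def MR {k r : ℕ} (Ω Ωh : Fin r → Finset (Fin k)) : ℝ :=
  ⨅ σ : Equiv.Perm (Fin r), ∑ j, (((Ω j) \ (Ωh (σ j))).card : ℝ) / ((Ω j).card : ℝ)

/-- k-means objective on the rows of `U`. -/
def kmeansObj {k r : ℕ} (U : Matrix (Fin k) (Fin r) ℝ) (Ωh : Fin r → Finset (Fin k))
    (c : Fin r → Fin r → ℝ) : ℝ :=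
  ∑ s, ∑ i ∈ Ωh s, ∑ j, (U i j - c s j) ^ 2

/-- Optimal value of the k-means problem on the rows of `U`. -/
def kmeansOpt {k r : ℕ} (U : Matrix (Fin k) (Fin r) ℝ) : ℝ :=
  sInf {v : ℝ | ∃ Ωh c, IsPartition Ωh ∧ v = kmeansObj U Ωh c}

/-- A (1+ε) approximate solution of the k-means problem on the rows of `U`. -/
def IsApproxKMeans {k r : ℕ} (U : Matrix (Fin k) (Fin r) ℝ) (ε : ℝ)
    (Ωh : Fin r → Finset (Fin k)) (c : Fin r → Fin r → ℝ) : Prop :=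
  IsPartition Ωh ∧ kmeansObj U Ωh c ≤ (1 + ε) * kmeansOpt U

/-- Optimal value of the k-means problem in membership-matrix form. -/
def kmeansOptM {k r : ℕ} (U : Matrix (Fin k) (Fin r) ℝ) : ℝ :=
  sInf {v : ℝ | ∃ (M : Matrix (Fin k) (Fin r) ℝ) (C : Matrix (Fin r) (Fin r) ℝ),
    IsMembership M ∧ v = frob (M * C - U) ^ 2}

/-- Number of t ∈ {1,…,N} with x_{t−1} = i. -/
def countState {k N : ℕ} (x : Fin (N+1) → Fin k) (i : Fin k) : ℕ :=
  (Finset.univ.filter fun t : Fin N => x t.castSucc = i).card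

/-- Number of t ∈ {1,…,N} with x_{t−1} = i and x_t = j. -/
def countTrans {k N : ℕ} (x : Fin (N+1) → Fin k) (i j : Fin k) : ℕ :=
  (Finset.univ.filter fun t : Fin N => x t.castSucc = i ∧ x t.succ = j).card

/-- Empirical state distribution. -/
def empPi {k N : ℕ} (x : Fin (N+1) → Fin k) (i : Fin k) : ℝ :=
  (countState x i : ℝ) / (N : ℝ)

/-- Empirical frequency matrix. -/
def empF {k N : ℕ} (x : Fin (N+1) → Fin k) : Matrix (Fin k) (Fin k) ℝ :=
  Matrix.of fun i j => (countTrans x i j : ℝ) / (N : ℝ)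

/-- Empirical transition matrix (uniform row if a state never occurs). -/
def empMatrix {k N : ℕ} (x : Fin (N+1) → Fin k) : Matrix (Fin k) (Fin k) ℝ :=
  Matrix.of fun i j =>
    if countState x i = 0 then 1 / (k : ℝ)
    else (countTrans x i j : ℝ) / (countState x i : ℝ)

/-- Probability weight of a finite Markov-chain path with initial distribution `pi0`. -/
def pathWeight {k : ℕ} (N : ℕ) (P : Matrix (Fin k) (Fin k) ℝ) (pi0 : Fin k → ℝ)
    (x : Fin (N+1) → Fin k) : ℝ :=
  pi0 (x 0) * ∏ t : Fin N, P (x t.castSucc) (x t.succ)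

/-- Probability of an event over Markov-chain trajectories of length N+1. -/
def pathProb {k : ℕ} (N : ℕ) (P : Matrix (Fin k) (Fin k) ℝ) (pi0 : Fin k → ℝ)
    (E : Set ((Fin (N+1)) → Fin k)) : ℝ :=
  ∑ x : Fin (N+1) → Fin k, E.indicator (pathWeight N P pi0) x

end MJ

namespace MJ

lemma l2_sq {m : ℕ} (v : Fin m → ℝ) : l2 v ^ 2 = ∑ j, v j ^ 2 :=
  Real.sq_sqrt (Finset.sum_nonneg fun _ _ => sq_nonneg _)

lemma frob_sq {m k : ℕ} (A : Matrix (Fin m) (Fin k) ℝ) :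
    frob A ^ 2 = ∑ i, ∑ j, A i j ^ 2 :=
  Real.sq_sqrt (Finset.sum_nonneg fun _ _ => Finset.sum_nonneg fun _ _ => sq_nonneg _)

lemma l2_sub_eq_dist {m : ℕ} (x y : Fin m → ℝ) :
    l2 (fun j => x j - y j) = dist (WithLp.toLp 2 x) (WithLp.toLp 2 y) := by
  simp [l2, EuclideanSpace.dist_eq, Real.dist_eq, sq_abs]

lemma frob_sub_sq_le {m k : ℕ} (A B U : Matrix (Fin m) (Fin k) ℝ) :
    frob (A - B) ^ 2 ≤ 2 * frob (A - U) ^ 2 + 2 * frob (B - U) ^ 2 := by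
  simp only [frob_sq, Finset.mul_sum, ← Finset.sum_add_distrib, Matrix.sub_apply]
  gcongr with i _ j _
  nlinarith [sq_nonneg (A i j - U i j + (B i j - U i j))]

namespace IsMembership

variable {k r : ℕ} {M : Matrix (Fin k) (Fin r) ℝ}

def label (hM : IsMembership M) (i : Fin k) : Fin r := (hM i).choose

lemma apply_eq (hM : IsMembership M) (i : Fin k) (j : Fin r) :
    M i j = if hM.label i = j then 1 else 0 := by
  obtain ⟨h1, h0⟩ := (hM i).choose_spec
  split_ifs with h
  · exact h ▸ h1
  · exact h0 j (Ne.symm h)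

lemma eq_one_iff (hM : IsMembership M) {i : Fin k} {j : Fin r} :
    M i j = 1 ↔ hM.label i = j := by
  rw [hM.apply_eq]; split_ifs <;> simp_all

lemma mul_apply (hM : IsMembership M) {m : ℕ} (C : Matrix (Fin r) (Fin m) ℝ)
    (i : Fin k) (j : Fin m) : (M * C) i j = C (hM.label i) j := by
  simp [Matrix.mul_apply, hM.apply_eq]

end IsMembership

lemma kmeansOptM_le {k r : ℕ} (U : Matrix (Fin k) (Fin r) ℝ) {M : Matrix (Fin k) (Fin r) ℝ}
    (hM : IsMembership M) (C : Matrix (Fin r) (Fin r) ℝ) :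
    kmeansOptM U ≤ frob (M * C - U) ^ 2 :=
  csInf_le ⟨0, by rintro _ ⟨_, _, _, rfl⟩; positivity⟩ ⟨M, C, hM, rfl⟩

lemma frob_sq_sub_le_of_approx {n r : ℕ} {ε : ℝ} (hε : 0 ≤ 1 + ε)
    {U A Mb : Matrix (Fin n) (Fin r) ℝ} (Cb : Matrix (Fin r) (Fin r) ℝ)
    (hMb : IsMembership Mb) (hA : frob (A - U) ^ 2 ≤ (1 + ε) * kmeansOptM U) :
    frob (A - Mb * Cb) ^ 2 ≤ (4 + 2 * ε) * frob (Mb * Cb - U) ^ 2 := by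
  have := frob_sub_sq_le A (Mb * Cb) U
  have hopt := mul_le_mul_of_nonneg_left (kmeansOptM_le U hMb Cb) hε
  linarith

lemma sum_ncard_mul_sq_le {n m r : ℕ} (D : Matrix (Fin n) (Fin m) ℝ) (lab : Fin n → Fin r)
    {δ : Fin r → ℝ} (hδ : ∀ k, 0 ≤ δ k) :
    ∑ k, ({i | lab i = k ∧ δ k / 2 ≤ l2 (fun j => D i j)}.ncard : ℝ) * δ k ^ 2
      ≤ 4 * frob D ^ 2 := by
  have hrow : ∀ i k, δ k / 2 ≤ l2 (fun j => D i j) → δ k ^ 2 ≤ 4 * ∑ j, D i j ^ 2 := by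
    intro i k h
    have := pow_le_pow_left₀ (by linarith [hδ k]) h 2
    rw [l2_sq] at this
    linarith
  calc ∑ k, ({i | lab i = k ∧ δ k / 2 ≤ l2 (fun j => D i j)}.ncard : ℝ) * δ k ^ 2
      = ∑ k, ∑ i with lab i = k ∧ δ k / 2 ≤ l2 (fun j => D i j), δ k ^ 2 := by
        simp [Set.ncard_eq_toFinset_card']
    _ ≤ ∑ k, ∑ i with lab i = k ∧ δ k / 2 ≤ l2 (fun j => D i j), 4 * ∑ j, D i j ^ 2 := by
        gcongr with k _ i hi
        exact hrow i k (Finset.mem_filter.1 hi).2.2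
    _ ≤ ∑ k, ∑ i with lab i = k, 4 * ∑ j, D i j ^ 2 := by
        gcongr with k _ i
        exact fun h => h.1
    _ = 4 * frob D ^ 2 := by
        rw [Finset.sum_fiberwise, ← Finset.mul_sum, frob_sq]

lemma exists_close_of_lt_ncard {n m r : ℕ} (D : Matrix (Fin n) (Fin m) ℝ) (lab : Fin n → Fin r)
    {δ : Fin r → ℝ} (hδ : ∀ k, 0 < δ k) {B : ℝ} (hB : 4 * frob D ^ 2 ≤ B) (k : Fin r)
    (hk : B / δ k ^ 2 < ({i | lab i = k}.ncard : ℝ)) :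
    ∃ i, lab i = k ∧ l2 (fun j => D i j) < δ k / 2 := by
  let S (k : Fin r) := {i | lab i = k ∧ δ k / 2 ≤ l2 (fun j => D i j)}
  have hS : ((S k).ncard : ℝ) * δ k ^ 2 ≤ B :=
    (Finset.single_le_sum (f := fun k => ((S k).ncard : ℝ) * δ k ^ 2)
      (fun _ _ => by positivity) (Finset.mem_univ k)).trans
      ((sum_ncard_mul_sq_le D lab fun k => (hδ k).le).trans hB)
  have hlt := ((le_div_iff₀ (pow_pos (hδ k) 2)).2 hS).trans_lt hk
  obtain ⟨i, hik, hi⟩ := Set.exists_mem_notMem_of_ncard_lt_ncard (Nat.cast_lt.1 hlt)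
  exact ⟨i, hik, lt_of_not_ge fun h => hi ⟨hik, h⟩⟩

lemma eq_of_l2_sub_lt_half {m r : ℕ} {Cb : Matrix (Fin r) (Fin m) ℝ} {δ : Fin r → ℝ}
    (hδ : ∀ k l, l ≠ k → δ k ≤ l2 (fun j => Cb l j - Cb k j)) {x : Fin m → ℝ} {k l : Fin r}
    (hk : l2 (fun j => x j - Cb k j) < δ k / 2) (hl : l2 (fun j => x j - Cb l j) < δ l / 2) :
    k = l := by
  by_contra hkl
  have h₁ := hδ k l (Ne.symm hkl)
  have h₂ := hδ l k hkl
  simp only [l2_sub_eq_dist] at hk hl h₁ h₂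
  have := dist_triangle_left (WithLp.toLp 2 (Cb l)) (WithLp.toLp 2 (Cb k)) (WithLp.toLp 2 x)
  rw [dist_comm (WithLp.toLp 2 (Cb k))] at h₂
  linarith

lemma exists_perm_comp_eq {α ι : Type*} [Finite ι] (lab lab' : α → ι) (good : α → Prop)
    (hcompat : ∀ i i', good i → good i' → lab i = lab i' → lab' i = lab' i')
    (hcover : ∀ k, ∃ i, good i ∧ lab' i = k) :
    ∃ σ : Equiv.Perm ι, ∀ i, good i → σ (lab i) = lab' i := by
  choose w hwgood hw using hcover
  have hinj : Function.Injective (lab ∘ w) := fun k l h => by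
    simpa [hw] using hcompat _ _ (hwgood k) (hwgood l) h
  let τ := Equiv.ofBijective _ (Finite.injective_iff_bijective.1 hinj)
  refine ⟨τ.symm, fun i hi => ?_⟩
  have hτ : lab (w (τ.symm (lab i))) = lab i := τ.apply_symm_apply (lab i)
  simpa [hw] using hcompat _ _ (hwgood _) hi hτ

end MJ

open MJ in
/-- approximate k-means error bound (Lemma 5.3 in Lei–Rinaldo). -/
theorem stmt6 {n r : ℕ} (ε : ℝ) (hε : 0 < ε)
    (U Ub Mb : Matrix (Fin n) (Fin r) ℝ) (Cb : Matrix (Fin r) (Fin r) ℝ)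
    (hMb : IsMembership Mb) (hUb : Ub = Mb * Cb)
    (M : Matrix (Fin n) (Fin r) ℝ) (C : Matrix (Fin r) (Fin r) ℝ)
    (hM : IsMembership M)
    (hsol : frob (M * C - U) ^ 2 ≤ (1 + ε) * kmeansOptM U)
    (δ : Fin r → ℝ) (hδpos : ∀ k, 0 < δ k)
    (hδ : ∀ k l, l ≠ k → δ k ≤ l2 (fun j => Cb l j - Cb k j)) :
    (∑ k, (({i : Fin n | Mb i k = 1 ∧
        δ k / 2 ≤ l2 (fun j => (M * C) i j - Ub i j)}.ncard : ℝ) * δ k ^ 2)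
      ≤ 4 * (4 + 2 * ε) * frob (Ub - U) ^ 2) ∧
    ((∀ k, (16 + 8 * ε) * frob (Ub - U) ^ 2 / δ k ^ 2
        < ({i : Fin n | Mb i k = 1}.ncard : ℝ)) →
      ∃ σ : Equiv.Perm (Fin r), ∀ i : Fin n,
        (∃ k, Mb i k = 1 ∧ l2 (fun j => (M * C) i j - Ub i j) < δ k / 2) →
        ∀ j, Mb i j =
          (M * Matrix.of (fun a b : Fin r => if σ a = b then (1 : ℝ) else 0)) i j) := by
  subst hUb
  have hD : 4 * frob (M * C - Mb * Cb) ^ 2 ≤ (16 + 8 * ε) * frob (Mb * Cb - U) ^ 2 := by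
    linarith [frob_sq_sub_le_of_approx (by linarith) Cb hMb hsol]
  simp only [hMb.eq_one_iff]
  refine ⟨(sum_ncard_mul_sq_le (M * C - Mb * Cb) hMb.label fun k => (hδpos k).le).trans
    (by linarith), fun hcond => ?_⟩
  have hcover := exists_close_of_lt_ncard (M * C - Mb * Cb) hMb.label hδpos hD
  simp only [Matrix.sub_apply, hM.mul_apply, hMb.mul_apply] at hcover ⊢
  obtain ⟨σ, hσ⟩ := exists_perm_comp_eq hM.label hMb.label
    (fun i => l2 (fun j => C (hM.label i) j - Cb (hMb.label i) j) < δ (hMb.label i) / 2)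
    (fun i i' hi hi' h => eq_of_l2_sub_lt_half hδ hi (h ▸ hi'))
    (fun k => by obtain ⟨i, rfl, hi⟩ := hcover k (hcond k); exact ⟨i, hi, rfl⟩)
  refine ⟨σ, ?_⟩
  rintro i ⟨_, rfl, hi⟩ j
  simp [hMb.apply_eq, hσ i hi]
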